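/- arXiv:0812.0172 — 6 statements merged into one kernel-verified Lean document; each statement's English description precedes it below -/
import Mathlib

section
/- Let M, n, m be positive integers with n < M and m < M. Let T be an invertible M×M real matrix written in block form T = [[A, B], [G, D]] where A has size n×m (so B has size n×(M−m), G has size (M−n)×m, and D has size (M−n)×(M−m)), and write T⁻¹ = [[E, C], [H, F]] where E has size m×n (so C has size m×(M−n)). Then the nullity of B equals the nullity of C, i.e., dim ker B = dim ker C, where B and C are viewed as linear maps. -/
/-!
If `T = [[A, B], [G, D]]` and `T⁻¹ = [[E, C], [H, F]]`, the off-diagonal block of `T⁻¹ T = 1`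
gives `E B + C D = 0`, so `D` maps `ker B` into `ker C`. It does so injectively: a vector
killed by both `B` and `D` is killed by `T`, hence is zero. Thus `dim ker B ≤ dim ker C`, and
the same argument applied to `T⁻¹` (whose inverse is `T`) gives the reverse inequality.
-/

namespace Matrix

variable {K : Type*} [Field K] {p q r s : Type*} [Fintype p] [Fintype r] [Fintype s]
  [DecidableEq q] [DecidableEq s]
  {A : Matrix p q K} {B : Matrix p s K} {G : Matrix r q K} {D : Matrix r s K}
  {E : Matrix q p K} {C : Matrix q r K} {H : Matrix s p K} {F : Matrix s r K}

theorem mulVec_mem_ker_of_fromBlocks_mul_eq_one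
    (h : fromBlocks E C H F * fromBlocks A B G D = 1) {x : s → K}
    (hx : x ∈ LinearMap.ker B.mulVecLin) : D *ᵥ x ∈ LinearMap.ker C.mulVecLin := by
  have hEBCD : E * B + C * D = 0 := by
    simpa only [fromBlocks_multiply, toBlocks_fromBlocks₁₂, ← fromBlocks_one]
      using congrArg toBlocks₁₂ h
  simp only [LinearMap.mem_ker, mulVecLin_apply] at hx ⊢
  calc C *ᵥ (D *ᵥ x) = (E * B + C * D) *ᵥ x := by
        rw [add_mulVec, ← mulVec_mulVec, ← mulVec_mulVec, hx, mulVec_zero, zero_add]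
    _ = 0 := by rw [hEBCD, zero_mulVec]

theorem eq_zero_of_right_column_mulVec_eq_zero [Fintype q]
    (h : fromBlocks E C H F * fromBlocks A B G D = 1) {x : s → K}
    (hB : B *ᵥ x = 0) (hD : D *ᵥ x = 0) : x = 0 := by
  have hT : fromBlocks A B G D *ᵥ Sum.elim 0 x = 0 := by
    ext (i | i) <;> simp [fromBlocks_mulVec, hB, hD]
  have hx : Sum.elim (0 : q → K) x = 0 := by
    simpa only [mulVec_mulVec, h, one_mulVec, mulVec_zero]
      using congrArg (fromBlocks E C H F *ᵥ ·) hT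
  funext i
  simpa using congrFun hx (Sum.inr i)

theorem finrank_ker_le_of_fromBlocks_mul_eq_one [Fintype q]
    (h : fromBlocks E C H F * fromBlocks A B G D = 1) :
    Module.finrank K (LinearMap.ker B.mulVecLin) ≤
      Module.finrank K (LinearMap.ker C.mulVecLin) := by
  have hinj : Function.Injective
      (D.mulVecLin.restrict fun _ hx ↦ mulVec_mem_ker_of_fromBlocks_mul_eq_one h hx) := by
    rw [← LinearMap.ker_eq_bot, LinearMap.ker_eq_bot']
    rintro ⟨x, hx⟩ hDx
    have hD : D *ᵥ x = 0 := congrArg Subtype.val hDx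
    exact Subtype.ext (eq_zero_of_right_column_mulVec_eq_zero h hx hD)
  exact LinearMap.finrank_le_finrank_of_injective hinj

end Matrix

open Matrix in
theorem nullity_theorem_general (M n m : ℕ)
    (A : Matrix (Fin n) (Fin m) ℝ) (B : Matrix (Fin n) (Fin (M - m)) ℝ)
    (G : Matrix (Fin (M - n)) (Fin m) ℝ) (D : Matrix (Fin (M - n)) (Fin (M - m)) ℝ)
    (E : Matrix (Fin m) (Fin n) ℝ) (C : Matrix (Fin m) (Fin (M - n)) ℝ)
    (H : Matrix (Fin (M - m)) (Fin n) ℝ) (F : Matrix (Fin (M - m)) (Fin (M - n)) ℝ)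
    (h1 : Matrix.fromBlocks A B G D * Matrix.fromBlocks E C H F = 1)
    (h2 : Matrix.fromBlocks E C H F * Matrix.fromBlocks A B G D = 1) :
    Module.finrank ℝ (LinearMap.ker B.mulVecLin) =
      Module.finrank ℝ (LinearMap.ker C.mulVecLin) :=
  le_antisymm (finrank_ker_le_of_fromBlocks_mul_eq_one h2)
    (finrank_ker_le_of_fromBlocks_mul_eq_one h1)

/-- **The Nullity Theorem.** If `T = [[A, B], [G, D]]` is an invertible `M × M` real matrix
(with `A` of size `n × m`) and `T⁻¹ = [[E, C], [H, F]]` (with `E` of size `m × n`), then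
the nullity of `B` equals the nullity of `C`. -/
theorem nullity_theorem (M n m : ℕ) (hn : 0 < n) (hm : 0 < m) (hnM : n < M) (hmM : m < M)
    (A : Matrix (Fin n) (Fin m) ℝ) (B : Matrix (Fin n) (Fin (M - m)) ℝ)
    (G : Matrix (Fin (M - n)) (Fin m) ℝ) (D : Matrix (Fin (M - n)) (Fin (M - m)) ℝ)
    (E : Matrix (Fin m) (Fin n) ℝ) (C : Matrix (Fin m) (Fin (M - n)) ℝ)
    (H : Matrix (Fin (M - m)) (Fin n) ℝ) (F : Matrix (Fin (M - m)) (Fin (M - n)) ℝ)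
    (h1 : Matrix.fromBlocks A B G D * Matrix.fromBlocks E C H F = 1)
    (h2 : Matrix.fromBlocks E C H F * Matrix.fromBlocks A B G D = 1) :
    Module.finrank ℝ (LinearMap.ker B.mulVecLin) =
      Module.finrank ℝ (LinearMap.ker C.mulVecLin) :=
  nullity_theorem_general M n m A B G D E C H F h1 h2
end

section
/- Let M, n, p be positive integers with n + p < M. Let K be an invertible M×M real matrix written in block form K = [[A, B], [G, D]] where A has size n×(n+p) (so B has size n×(M−n−p)), and write K⁻¹ = [[E, C], [H, F]] where E has size (n+p)×n (so C has size (n+p)×(M−n)). Then rank C = rank B + p. -/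
/-!
Writing `K = [[A, B], [G, D]]` and `K⁻¹ = [[E, C], [H, F]]`, the block identities
`A C + B F = 0`, `G C + D F = 1`, `E B + C D = 0`, `H B + F D = 1` show that `F` and `D`
restrict to mutually inverse maps between `ker C` and `ker B`. Equal nullities plus
rank–nullity give `rank C - rank B = (M - n) - (M - n - p) = p`.
-/

open LinearMap Module

namespace Matrix

section Blocks

variable {R : Type*} [CommRing R] {l m n o : Type*} [Fintype m] [Fintype n]

lemma mulVec_mulVec_eq_zero_of_mul_add_mul_eq_zero [Fintype o]
    {A : Matrix l m R} {B : Matrix l n R} {C : Matrix m o R} {F : Matrix n o R}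
    (h : A * C + B * F = 0) {x : o → R} (hx : C *ᵥ x = 0) : B *ᵥ (F *ᵥ x) = 0 := by
  have := congrArg (· *ᵥ x) h
  simpa only [add_mulVec, ← mulVec_mulVec, hx, mulVec_zero, zero_add, zero_mulVec] using this

lemma mulVec_mulVec_eq_self_of_mul_add_mul_eq_one [Fintype o] [DecidableEq o]
    {G : Matrix o m R} {D : Matrix o n R} {C : Matrix m o R} {F : Matrix n o R}
    (h : G * C + D * F = 1) {x : o → R} (hx : C *ᵥ x = 0) : D *ᵥ (F *ᵥ x) = x := by
  have := congrArg (· *ᵥ x) h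
  simpa only [add_mulVec, ← mulVec_mulVec, hx, mulVec_zero, zero_add, one_mulVec] using this

lemma mul_add_mul_eq_of_fromBlocks_mul_eq_one [DecidableEq l] [DecidableEq o]
    {A : Matrix l m R} {B : Matrix l n R} {G : Matrix o m R} {D : Matrix o n R}
    {E : Matrix m l R} {C : Matrix m o R} {H : Matrix n l R} {F : Matrix n o R}
    (h : fromBlocks A B G D * fromBlocks E C H F = 1) :
    A * C + B * F = 0 ∧ G * C + D * F = 1 := by
  rw [fromBlocks_multiply, ← fromBlocks_one, fromBlocks_inj] at h
  exact ⟨h.2.1, h.2.2.2⟩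

end Blocks

section Nullity

variable {R : Type*} [Field R] {m₁ m₂ n₁ n₂ : Type*} [Fintype m₁] [Fintype m₂] [Fintype n₁]
  [Fintype n₂] [DecidableEq m₁] [DecidableEq m₂] [DecidableEq n₁] [DecidableEq n₂]
  {A : Matrix m₁ n₁ R} {B : Matrix m₁ n₂ R} {G : Matrix m₂ n₁ R} {D : Matrix m₂ n₂ R}
  {E : Matrix n₁ m₁ R} {C : Matrix n₁ m₂ R} {H : Matrix n₂ m₁ R} {F : Matrix n₂ m₂ R}

def kerMulVecLinEquivOfFromBlocksMulEqOne
    (h1 : fromBlocks A B G D * fromBlocks E C H F = 1)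
    (h2 : fromBlocks E C H F * fromBlocks A B G D = 1) :
    ker C.mulVecLin ≃ₗ[R] ker B.mulVecLin :=
  have hK := mul_add_mul_eq_of_fromBlocks_mul_eq_one h1
  have hK' := mul_add_mul_eq_of_fromBlocks_mul_eq_one h2
  LinearEquiv.ofLinearMap
    (F.mulVecLin.restrict fun _ hx => mulVec_mulVec_eq_zero_of_mul_add_mul_eq_zero hK.1 hx)
    (D.mulVecLin.restrict fun _ hy => mulVec_mulVec_eq_zero_of_mul_add_mul_eq_zero hK'.1 hy)
    (LinearMap.ext fun y => Subtype.ext <| mulVec_mulVec_eq_self_of_mul_add_mul_eq_one hK'.2 y.2)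
    (LinearMap.ext fun x => Subtype.ext <| mulVec_mulVec_eq_self_of_mul_add_mul_eq_one hK.2 x.2)

theorem rank_add_card_eq_of_fromBlocks_mul_eq_one
    (h1 : fromBlocks A B G D * fromBlocks E C H F = 1)
    (h2 : fromBlocks E C H F * fromBlocks A B G D = 1) :
    C.rank + Fintype.card n₂ = B.rank + Fintype.card m₂ := by
  have hker := (kerMulVecLinEquivOfFromBlocksMulEqOne h1 h2).finrank_eq
  have hC := C.mulVecLin.finrank_range_add_finrank_ker
  have hB := B.mulVecLin.finrank_range_add_finrank_ker
  rw [finrank_fintype_fun_eq_card] at hC hB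
  rw [rank, rank]
  omega

end Nullity

end Matrix

theorem rank_nullity_theorem_general (M n p : ℕ) (hM : n + p < M)
    (A : Matrix (Fin n) (Fin (n + p)) ℝ) (B : Matrix (Fin n) (Fin (M - n - p)) ℝ)
    (G : Matrix (Fin (M - n)) (Fin (n + p)) ℝ) (D : Matrix (Fin (M - n)) (Fin (M - n - p)) ℝ)
    (E : Matrix (Fin (n + p)) (Fin n) ℝ) (C : Matrix (Fin (n + p)) (Fin (M - n)) ℝ)
    (H : Matrix (Fin (M - n - p)) (Fin n) ℝ) (F : Matrix (Fin (M - n - p)) (Fin (M - n)) ℝ)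
    (h1 : Matrix.fromBlocks A B G D * Matrix.fromBlocks E C H F = 1)
    (h2 : Matrix.fromBlocks E C H F * Matrix.fromBlocks A B G D = 1) :
    C.rank = B.rank + p := by
  have := Matrix.rank_add_card_eq_of_fromBlocks_mul_eq_one h1 h2
  simp only [Fintype.card_fin] at this
  omega

/-- **Rank form of the Nullity Theorem.** If `K = [[A, B], [G, D]]` is an invertible `M × M`
real matrix with `A` of size `n × (n+p)`, and `K⁻¹ = [[E, C], [H, F]]` with `E` of size
`(n+p) × n`, then `rank C = rank B + p`. -/
theorem rank_nullity_theorem (M n p : ℕ) (hn : 0 < n) (hp : 0 < p) (hM : n + p < M)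
    (A : Matrix (Fin n) (Fin (n + p)) ℝ) (B : Matrix (Fin n) (Fin (M - n - p)) ℝ)
    (G : Matrix (Fin (M - n)) (Fin (n + p)) ℝ) (D : Matrix (Fin (M - n)) (Fin (M - n - p)) ℝ)
    (E : Matrix (Fin (n + p)) (Fin n) ℝ) (C : Matrix (Fin (n + p)) (Fin (M - n)) ℝ)
    (H : Matrix (Fin (M - n - p)) (Fin n) ℝ) (F : Matrix (Fin (M - n - p)) (Fin (M - n)) ℝ)
    (h1 : Matrix.fromBlocks A B G D * Matrix.fromBlocks E C H F = 1)
    (h2 : Matrix.fromBlocks E C H F * Matrix.fromBlocks A B G D = 1) :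
    C.rank = B.rank + p :=
  rank_nullity_theorem_general M n p hM A B G D E C H F h1 h2
end

section
/- Let M, n, p be positive integers with n + p < M. Let K = (k_{ij}) be an invertible M×M real matrix such that k_{ij} = 0 whenever j − i > p (in particular this holds if K is banded of bandwidth p, i.e., k_{ij} = 0 whenever |i−j| > p). Let C be the submatrix of K⁻¹ consisting of rows 1,…,n+p and columns n+1,…,M. Then rank C ≤ p. -/
/-!
Let `B` be the block of `K` on rows `1, …, n` and columns `1, …, n+p`. The band condition says
rows `1, …, n` of `K` vanish beyond column `n+p`, so `B * C` is the block of `K * K⁻¹ = 1` on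
rows `1, …, n` and columns `n+1, …, M`, which is zero. Those rows of `K` are linearly
independent and dropping their zero entries keeps them so, hence `rank B = n`, and
`rank B + rank C ≤ n + p` gives `rank C ≤ p`.
-/

namespace Matrix

variable {R : Type*} {ι k l m n o : Type*}

theorem submatrix_mul_of_injective [NonUnitalNonAssocSemiring R] [Fintype ι] [Fintype k]
    (A : Matrix l ι R) (B : Matrix ι n R) {r : m → l} {s : k → ι} (hs : Function.Injective s)
    (hA : ∀ a, ∀ j ∉ Set.range s, A (r a) j = 0) (c : o → n) :
    (A * B).submatrix r c = A.submatrix r s * B.submatrix s c := by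
  ext a b
  simp only [submatrix_apply, mul_apply]
  exact (Fintype.sum_of_injective s hs _ _ (fun j hj => by rw [hA a j hj, zero_mul])
    fun _ => rfl).symm

variable [Field R] [Fintype ι] [DecidableEq ι] [Fintype k] [Fintype m]

theorem rank_submatrix_of_isUnit {K : Matrix ι ι R} (hK : IsUnit K) {r : m → ι}
    (hr : Function.Injective r) {s : k → ι} (hs : Function.Injective s)
    (hK_rows : ∀ a, ∀ j ∉ Set.range s, K (r a) j = 0) :
    (K.submatrix r s).rank = Fintype.card m := by
  refine le_antisymm (rank_le_card_height _) ?_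
  calc Fintype.card m = (K.submatrix r id).rank :=
        (((linearIndependent_rows_of_isUnit hK).comp r hr).rank_matrix).symm
    _ = (K.submatrix r s * (1 : Matrix ι ι R).submatrix s id).rank := by
      rw [← submatrix_mul_of_injective K 1 hs hK_rows, Matrix.mul_one]
    _ ≤ (K.submatrix r s).rank := rank_mul_le_left _ _

theorem rank_submatrix_inv_add_card_le [Fintype o] {K : Matrix ι ι R} (hK : IsUnit K)
    {r : m → ι} (hr : Function.Injective r) {s : k → ι} (hs : Function.Injective s)
    (hK_rows : ∀ a, ∀ j ∉ Set.range s, K (r a) j = 0) {c : o → ι} (hrc : ∀ a b, r a ≠ c b) :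
    (K⁻¹.submatrix s c).rank + Fintype.card m ≤ Fintype.card k := by
  have hmul : K.submatrix r s * K⁻¹.submatrix s c = 0 := by
    rw [← submatrix_mul_of_injective K K⁻¹ hs hK_rows,
      mul_nonsing_inv K ((isUnit_iff_isUnit_det K).mp hK)]
    ext a b
    exact one_apply_ne (hrc a b)
  rw [← rank_submatrix_of_isUnit hK hr hs hK_rows, add_comm]
  exact rank_add_rank_le_card_of_mul_eq_zero hmul

end Matrix

/-- If `K` is an invertible `M × M` real matrix with `K i j = 0` whenever `j - i > p`
(in particular if `K` is banded of bandwidth `p`), then the submatrix of `K⁻¹` formed by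
rows `1, …, n+p` and columns `n+1, …, M` has rank at most `p`. -/
theorem rank_offdiag_block_le (M n p : ℕ) (hM : n + p < M)
    (K : Matrix (Fin M) (Fin M) ℝ) (hK : IsUnit K)
    (hband : ∀ i j : Fin M, (i : ℕ) + p < (j : ℕ) → K i j = 0) :
    (K⁻¹.submatrix
        (fun i : Fin (n + p) => (⟨(i : ℕ), lt_trans i.isLt hM⟩ : Fin M))
        (fun j : Fin (M - n) => (⟨n + (j : ℕ), by have := j.isLt; omega⟩ : Fin M))).rank
      ≤ p := by
  have hrank := Matrix.rank_submatrix_inv_add_card_le hK (r := Fin.castLE (by omega : n ≤ M))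
    (Fin.castLE_injective _) (s := fun i : Fin (n + p) => ⟨i, lt_trans i.isLt hM⟩)
    (fun _ _ h => Fin.ext (Fin.mk.inj_iff.mp h)) (fun a j hj => hband _ _ ?_)
    (c := fun j : Fin (M - n) => ⟨n + j, by omega⟩) (fun a b h => ?_)
  · simp only [Fintype.card_fin] at hrank
    omega
  · have hj' : n + p ≤ j := by
      by_contra hlt
      exact hj ⟨⟨j, by omega⟩, rfl⟩
    simp only [Fin.val_castLE]
    omega
  · have := congrArg Fin.val h
    simp only [Fin.val_castLE] at this
    omega
end

section
/- Let M, n, p be positive integers with n + p < M. Let A (size n×(n+p)), G (size (M−n)×(n+p)), D (size (M−n)×(M−n−p)) be real matrices such that K₀ = [[A, 0], [G, D]] is invertible. Let B be an n×(M−n−p) real matrix with ‖B‖·‖K₀⁻¹‖ < 1, and set K = [[A, B], [G, D]]. Write K⁻¹ = [[E, C], [H, F]], where C has size (n+p)×(M−n). Then σ_{p+1}(C) ≤ ‖K₀⁻¹‖²·‖B‖ / (1 − ‖K₀⁻¹‖·‖B‖), where σ_{p+1}(C) denotes the (p+1)-st largest singular value of C. -/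
/-- The spectral (operator) norm of a real matrix: its operator norm as a linear map
between Euclidean spaces. -/
noncomputable def specNorm {m n : Type*} [Fintype m] [Fintype n] [DecidableEq n]
    (X : Matrix m n ℝ) : ℝ :=
  ‖LinearMap.toContinuousLinearMap (Matrix.toEuclideanLin X)‖

/-- The `i`-th largest singular value (1-indexed) of a real matrix, via the
Eckart–Young characterization `σ_i(X) = inf {‖X − L‖ : rank L ≤ i − 1}`. -/
noncomputable def singularValue {m n : Type*} [Fintype m] [Fintype n] [DecidableEq n]
    (X : Matrix m n ℝ) (i : ℕ) : ℝ :=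
  sInf { r : ℝ | ∃ L : Matrix m n ℝ, L.rank ≤ i - 1 ∧ r = specNorm (X - L) }

/-! Let `Q = K₀⁻¹` and `X = K⁻¹`. The perturbation `K - K₀ = [[0, B], [0, 0]]` has norm at most
`‖B‖`, so `K = K₀ (1 + Q (K - K₀))` is invertible by the Neumann series, and the resolvent identity
`X - Q = X (K₀ - K) Q` together with `‖X‖ ≤ ‖Q‖ + ‖X - Q‖` gives
`‖X - Q‖ ≤ ‖Q‖² ‖B‖ / (1 - ‖Q‖ ‖B‖)`. The block `C - C₀` of `X - Q` has no larger norm, and `C₀`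
has rank at most `p`: from `K₀ Q = 1` we read off `A E₀ = 1` and `A C₀ = 0`, so the columns of `C₀`
lie in the `p`-dimensional kernel of the full-rank `A`. Hence `C₀` competes in the Eckart–Young
infimum defining `σ_{p+1}(C)`. -/

open scoped Matrix.Norms.L2Operator
open Matrix Function

namespace Matrix

variable {𝕜 : Type*} [RCLike 𝕜] {l m n o : Type*} [Fintype l] [Fintype m] [Fintype n] [Fintype o]
  [DecidableEq l] [DecidableEq m] [DecidableEq n] [DecidableEq o]

lemma l2_opNorm_one_le : ‖(1 : Matrix n n 𝕜)‖ ≤ 1 := by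
  rw [← diagonal_one, l2_opNorm_diagonal]
  exact (pi_norm_le_iff_of_nonneg zero_le_one).2 fun _ => by simp

lemma l2_opNorm_one_submatrix_le {f : m → n} (hf : Injective f) :
    ‖(1 : Matrix n n 𝕜).submatrix f id‖ ≤ 1 := by
  set S := (1 : Matrix n n 𝕜).submatrix f id
  have hS : S * Sᴴ = 1 := by
    ext i j
    simp [S, mul_apply, one_apply, hf.eq_iff]
  have := l2_opNorm_conjTranspose_mul_self Sᴴ
  rw [conjTranspose_conjTranspose, hS, l2_opNorm_conjTranspose] at this
  nlinarith [l2_opNorm_one_le (𝕜 := 𝕜) (n := m), norm_nonneg S]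

lemma l2_opNorm_submatrix_le (X : Matrix m n 𝕜) {f : l → m} {g : o → n} (hf : Injective f)
    (hg : Injective g) : ‖X.submatrix f g‖ ≤ ‖X‖ := by
  have hX : X.submatrix f g =
      (1 : Matrix m m 𝕜).submatrix f id * X * ((1 : Matrix n n 𝕜).submatrix g id)ᴴ := by
    ext i j
    simp [mul_apply, one_apply]
  calc ‖X.submatrix f g‖
      ≤ ‖(1 : Matrix m m 𝕜).submatrix f id‖ * ‖X‖ * ‖((1 : Matrix n n 𝕜).submatrix g id)ᴴ‖ := by
        grw [hX, l2_opNorm_mul, l2_opNorm_mul]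
    _ ≤ 1 * ‖X‖ * 1 := by
        grw [l2_opNorm_conjTranspose, l2_opNorm_one_submatrix_le hf, l2_opNorm_one_submatrix_le hg]
    _ = ‖X‖ := by ring

lemma l2_opNorm_toBlocks₁₂_le (X : Matrix (l ⊕ m) (n ⊕ o) 𝕜) : ‖X.toBlocks₁₂‖ ≤ ‖X‖ :=
  l2_opNorm_submatrix_le X Sum.inl_injective Sum.inr_injective

lemma l2_opNorm_fromBlocks_zero_zero_zero_le (B : Matrix l o 𝕜) :
    ‖fromBlocks (0 : Matrix l n 𝕜) B (0 : Matrix m n 𝕜) 0‖ ≤ ‖B‖ := by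
  have hB : fromBlocks (0 : Matrix l n 𝕜) B (0 : Matrix m n 𝕜) 0 =
      ((1 : Matrix (l ⊕ m) (l ⊕ m) 𝕜).submatrix Sum.inl id)ᴴ * B *
        (1 : Matrix (n ⊕ o) (n ⊕ o) 𝕜).submatrix Sum.inr id := by
    ext (i | i) (j | j) <;> simp [mul_apply, one_apply]
  calc _ ≤ ‖((1 : Matrix (l ⊕ m) (l ⊕ m) 𝕜).submatrix Sum.inl id)ᴴ‖ * ‖B‖ *
        ‖(1 : Matrix (n ⊕ o) (n ⊕ o) 𝕜).submatrix Sum.inr id‖ := by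
        grw [hB, l2_opNorm_mul, l2_opNorm_mul]
    _ ≤ 1 * ‖B‖ * 1 := by
        grw [l2_opNorm_conjTranspose, l2_opNorm_one_submatrix_le Sum.inl_injective,
          l2_opNorm_one_submatrix_le Sum.inr_injective]
    _ = ‖B‖ := by ring

variable {K K₀ : Matrix m n 𝕜} {Q : Matrix n m 𝕜} {δ : ℝ}

lemma exists_inverse_of_l2_opNorm_sub_le (hK₀Q : K₀ * Q = 1) (hQK₀ : Q * K₀ = 1)
    (hδ : ‖K - K₀‖ ≤ δ) (hδQ : δ * ‖Q‖ < 1) : ∃ S : Matrix n m 𝕜, K * S = 1 ∧ S * K = 1 := by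
  have hsmall : ‖-(Q * (K - K₀))‖ < 1 := by
    grw [norm_neg, l2_opNorm_mul, hδ]
    linarith
  set u := Units.oneSub _ hsmall
  have hK : K = K₀ * u.val := by
    simp only [u, Units.val_oneSub, sub_neg_eq_add, Matrix.mul_add, Matrix.mul_one,
      ← Matrix.mul_assoc, hK₀Q, Matrix.one_mul, add_sub_cancel]
  refine ⟨u⁻¹.val * Q, ?_, ?_⟩
  · rw [hK, Matrix.mul_assoc, ← Matrix.mul_assoc _ _ Q, u.mul_inv, Matrix.one_mul, hK₀Q]
  · rw [hK, Matrix.mul_assoc, ← Matrix.mul_assoc Q, hQK₀, Matrix.one_mul, u.inv_mul]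

lemma l2_opNorm_inv_sub_inv_le {X : Matrix n m 𝕜} (hXK : X * K = 1)
    (hK₀Q : K₀ * Q = 1) (hδ : ‖K - K₀‖ ≤ δ) (hδQ : δ * ‖Q‖ < 1) :
    ‖X - Q‖ ≤ ‖Q‖ ^ 2 * δ / (1 - ‖Q‖ * δ) := by
  have hXQ : X - Q = X * (K₀ - K) * Q := by
    rw [Matrix.mul_sub, Matrix.sub_mul, Matrix.mul_assoc, hK₀Q, hXK, Matrix.mul_one,
      Matrix.one_mul]
  have hle : ‖X - Q‖ ≤ ‖X‖ * δ * ‖Q‖ := by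
    grw [hXQ, l2_opNorm_mul, l2_opNorm_mul, norm_sub_rev, hδ]
  have hX : ‖X‖ ≤ ‖Q‖ + ‖X - Q‖ := norm_le_insert' X Q
  have hδ₀ : 0 ≤ δ := (norm_nonneg _).trans hδ
  rw [le_div_iff₀ (by linarith)]
  nlinarith [mul_le_mul_of_nonneg_right hX (mul_nonneg hδ₀ (norm_nonneg Q))]

end Matrix

lemma Matrix.rank_eq_card_of_mul_eq_one {R m n : Type*} [Field R] [Fintype m] [Fintype n]
    [DecidableEq m] {A : Matrix m n R} {E : Matrix n m R} (h : A * E = 1) :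
    A.rank = Fintype.card m :=
  le_antisymm A.rank_le_card_height <| by
    simpa [h, rank_one] using rank_mul_le_left A E

lemma singularValue_le_specNorm_sub {m n : Type*} [Fintype m] [Fintype n] [DecidableEq n]
    (X L : Matrix m n ℝ) {i : ℕ} (hL : L.rank ≤ i - 1) : singularValue X i ≤ specNorm (X - L) :=
  csInf_le ⟨0, by rintro _ ⟨L, -, rfl⟩; exact norm_nonneg _⟩ ⟨L, hL, rfl⟩

theorem singularValue_perturbation_bound_general (M n p : ℕ)
    (A : Matrix (Fin n) (Fin (n + p)) ℝ) (G : Matrix (Fin (M - n)) (Fin (n + p)) ℝ)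
    (D : Matrix (Fin (M - n)) (Fin (M - n - p)) ℝ)
    (E₀ : Matrix (Fin (n + p)) (Fin n) ℝ) (C₀ : Matrix (Fin (n + p)) (Fin (M - n)) ℝ)
    (H₀ : Matrix (Fin (M - n - p)) (Fin n) ℝ) (F₀ : Matrix (Fin (M - n - p)) (Fin (M - n)) ℝ)
    (hinv₀ : Matrix.fromBlocks A 0 G D * Matrix.fromBlocks E₀ C₀ H₀ F₀ = 1)
    (hinv₀' : Matrix.fromBlocks E₀ C₀ H₀ F₀ * Matrix.fromBlocks A 0 G D = 1)
    (B : Matrix (Fin n) (Fin (M - n - p)) ℝ)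
    (hB : specNorm B * specNorm (Matrix.fromBlocks E₀ C₀ H₀ F₀) < 1) :
    (∃ S : Matrix (Fin (n + p) ⊕ Fin (M - n - p)) (Fin n ⊕ Fin (M - n)) ℝ,
        Matrix.fromBlocks A B G D * S = 1 ∧ S * Matrix.fromBlocks A B G D = 1) ∧
      ∀ (E : Matrix (Fin (n + p)) (Fin n) ℝ) (C : Matrix (Fin (n + p)) (Fin (M - n)) ℝ)
        (H : Matrix (Fin (M - n - p)) (Fin n) ℝ) (F : Matrix (Fin (M - n - p)) (Fin (M - n)) ℝ),
        Matrix.fromBlocks A B G D * Matrix.fromBlocks E C H F = 1 →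
        Matrix.fromBlocks E C H F * Matrix.fromBlocks A B G D = 1 →
        singularValue C (p + 1) ≤
          specNorm (Matrix.fromBlocks E₀ C₀ H₀ F₀) ^ 2 * specNorm B /
            (1 - specNorm (Matrix.fromBlocks E₀ C₀ H₀ F₀) * specNorm B) := by
  have hδ : ‖fromBlocks A B G D - fromBlocks A 0 G D‖ ≤ ‖B‖ := by
    have hP : fromBlocks A B G D - fromBlocks A 0 G D = fromBlocks 0 B 0 0 := by
      ext (i | i) (j | j) <;> simp
    exact hP ▸ l2_opNorm_fromBlocks_zero_zero_zero_le B
  refine ⟨exists_inverse_of_l2_opNorm_sub_le hinv₀ hinv₀' hδ hB, fun E C H F _ hXK => ?_⟩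
  have hrow : A * E₀ = 1 ∧ A * C₀ = 0 := by
    rw [fromBlocks_multiply, ← fromBlocks_one, fromBlocks_inj] at hinv₀
    simpa using And.intro hinv₀.1 hinv₀.2.1
  have hrank : C₀.rank ≤ p := by
    simpa [rank_eq_card_of_mul_eq_one hrow.1] using rank_add_rank_le_card_of_mul_eq_zero hrow.2
  calc singularValue C (p + 1) ≤ specNorm (C - C₀) := singularValue_le_specNorm_sub C C₀ hrank
    _ ≤ ‖fromBlocks E C H F - fromBlocks E₀ C₀ H₀ F₀‖ :=
        l2_opNorm_toBlocks₁₂_le (fromBlocks E C H F - fromBlocks E₀ C₀ H₀ F₀)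
    _ ≤ _ := l2_opNorm_inv_sub_inv_le hXK hinv₀ hδ hB

/-- If `K₀ = [[A, 0], [G, D]]` is invertible and `‖B‖ ⬝ ‖K₀⁻¹‖ < 1`, then
`K = [[A, B], [G, D]]` is invertible and the `(p+1)`-st singular value of the upper-right
block `C` of `K⁻¹` satisfies `σ_{p+1}(C) ≤ ‖K₀⁻¹‖² ‖B‖ / (1 − ‖K₀⁻¹‖ ‖B‖)`. -/
theorem singularValue_perturbation_bound (M n p : ℕ) (hn : 0 < n) (hp : 0 < p)
    (hM : n + p < M)
    (A : Matrix (Fin n) (Fin (n + p)) ℝ) (G : Matrix (Fin (M - n)) (Fin (n + p)) ℝ)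
    (D : Matrix (Fin (M - n)) (Fin (M - n - p)) ℝ)
    (E₀ : Matrix (Fin (n + p)) (Fin n) ℝ) (C₀ : Matrix (Fin (n + p)) (Fin (M - n)) ℝ)
    (H₀ : Matrix (Fin (M - n - p)) (Fin n) ℝ) (F₀ : Matrix (Fin (M - n - p)) (Fin (M - n)) ℝ)
    (hinv₀ : Matrix.fromBlocks A 0 G D * Matrix.fromBlocks E₀ C₀ H₀ F₀ = 1)
    (hinv₀' : Matrix.fromBlocks E₀ C₀ H₀ F₀ * Matrix.fromBlocks A 0 G D = 1)
    (B : Matrix (Fin n) (Fin (M - n - p)) ℝ)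
    (hB : specNorm B * specNorm (Matrix.fromBlocks E₀ C₀ H₀ F₀) < 1) :
    (∃ S : Matrix (Fin (n + p) ⊕ Fin (M - n - p)) (Fin n ⊕ Fin (M - n)) ℝ,
        Matrix.fromBlocks A B G D * S = 1 ∧ S * Matrix.fromBlocks A B G D = 1) ∧
      ∀ (E : Matrix (Fin (n + p)) (Fin n) ℝ) (C : Matrix (Fin (n + p)) (Fin (M - n)) ℝ)
        (H : Matrix (Fin (M - n - p)) (Fin n) ℝ) (F : Matrix (Fin (M - n - p)) (Fin (M - n)) ℝ),
        Matrix.fromBlocks A B G D * Matrix.fromBlocks E C H F = 1 →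
        Matrix.fromBlocks E C H F * Matrix.fromBlocks A B G D = 1 →
        singularValue C (p + 1) ≤
          specNorm (Matrix.fromBlocks E₀ C₀ H₀ F₀) ^ 2 * specNorm B /
            (1 - specNorm (Matrix.fromBlocks E₀ C₀ H₀ F₀) * specNorm B) :=
  singularValue_perturbation_bound_general M n p A G D E₀ C₀ H₀ F₀ hinv₀ hinv₀' B hB
end

section
/- Let M, n, p be positive integers with n + p < M. Let K be an invertible M×M real matrix written in block form K = [[A, B], [G, D]] with A of size n×(n+p), and write K⁻¹ = [[E, C], [H, F]] with E of size (n+p)×n and C of size (n+p)×(M−n). Let L be an (n+p)×(M−n) real matrix such that J = [[E, L], [H, F]] is invertible, and write J⁻¹ = [[Ã, 0], [G̃, D̃]] partitioned conformally with K, i.e. with Ã of the same size as A, the zero block of the same size as B, G̃ of the same size as G, and D̃ of the same size as D. Then B = A(L − C)D̃ and A − Ã = A(L − C)G̃. -/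
/-- If `K = [[A, B], [G, D]]` is invertible with `K⁻¹ = [[E, C], [H, F]]`, and
`J = [[E, L], [H, F]]` is invertible with `J⁻¹ = [[A', 0], [G', D']]` partitioned
conformally with `K`, then `B = A (L − C) D'` and `A − A' = A (L − C) G'`. -/
theorem replaced_block_identities (M n p : ℕ) (hn : 0 < n) (hp : 0 < p) (hM : n + p < M)
    (A : Matrix (Fin n) (Fin (n + p)) ℝ) (B : Matrix (Fin n) (Fin (M - n - p)) ℝ)
    (G : Matrix (Fin (M - n)) (Fin (n + p)) ℝ) (D : Matrix (Fin (M - n)) (Fin (M - n - p)) ℝ)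
    (E : Matrix (Fin (n + p)) (Fin n) ℝ) (C : Matrix (Fin (n + p)) (Fin (M - n)) ℝ)
    (H : Matrix (Fin (M - n - p)) (Fin n) ℝ) (F : Matrix (Fin (M - n - p)) (Fin (M - n)) ℝ)
    (hKinv : Matrix.fromBlocks A B G D * Matrix.fromBlocks E C H F = 1)
    (hKinv' : Matrix.fromBlocks E C H F * Matrix.fromBlocks A B G D = 1)
    (L : Matrix (Fin (n + p)) (Fin (M - n)) ℝ)
    (A' : Matrix (Fin n) (Fin (n + p)) ℝ) (G' : Matrix (Fin (M - n)) (Fin (n + p)) ℝ)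
    (D' : Matrix (Fin (M - n)) (Fin (M - n - p)) ℝ)
    (hJinv : Matrix.fromBlocks E L H F * Matrix.fromBlocks A' 0 G' D' = 1)
    (hJinv' : Matrix.fromBlocks A' 0 G' D' * Matrix.fromBlocks E L H F = 1) :
    B = A * (L - C) * D' ∧ A - A' = A * (L - C) * G' := by

  set K := Matrix.fromBlocks A B G D with hK
  set J := Matrix.fromBlocks E L H F with hJ
  set Ji := Matrix.fromBlocks A' 0 G' D' with hJi
  have hdiff : J - Matrix.fromBlocks E C H F
      = Matrix.fromBlocks 0 (L - C) 0 0 := by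
    ext (i | i) (j | j) <;>
      simp [hJ, Matrix.fromBlocks, Matrix.sub_apply]
  have h1 : K * J = 1 + Matrix.fromBlocks 0 (A * (L - C)) 0 (G * (L - C)) := by
    have : K * J = K * Matrix.fromBlocks E C H F
        + K * (J - Matrix.fromBlocks E C H F) := by
      rw [Matrix.mul_sub]; abel
    rw [this, hKinv, hdiff, hK, Matrix.fromBlocks_multiply]
    simp
  have h2 : K = Ji + Matrix.fromBlocks (A * (L - C) * G') (A * (L - C) * D')
      (G * (L - C) * G') (G * (L - C) * D') := by
    have : K = K * J * Ji := by rw [Matrix.mul_assoc, hJinv, Matrix.mul_one]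
    rw [this, h1, Matrix.add_mul, Matrix.one_mul, hJi, Matrix.fromBlocks_multiply]
    simp [Matrix.mul_assoc]
  rw [hJi, Matrix.fromBlocks_add] at h2
  constructor
  · have := congrArg Matrix.toBlocks₁₂ h2
    simpa [hK, Matrix.toBlocks_fromBlocks₁₂] using this
  · have := congrArg Matrix.toBlocks₁₁ h2
    rw [hK, Matrix.toBlocks_fromBlocks₁₁, Matrix.toBlocks_fromBlocks₁₁] at this
    nth_rewrite 1 [this]
    abel
end

section
/- Let M, n, p be positive integers with n + p < M. Let K be an invertible M×M real matrix written in block form K = [[A, B], [G, D]] with A of size n×(n+p), and write K⁻¹ = [[E, C], [H, F]] with C of size (n+p)×(M−n). Suppose σ_p(C) > 0, and let L be a best rank-p approximation of C obtained by truncating a singular value decomposition of C after the first p singular values (so that ‖C − L‖ = σ_{p+1}(C)). Suppose σ_{p+1}(C) < 1/‖K‖, so that J = [[E, L], [H, F]] is invertible with J⁻¹ = [[Ã, 0], [G̃, D̃]] partitioned conformally with K (Ã the same size as A, D̃ the same size as D, G̃ the same size as G). Then ‖B‖ ≥ σ_n(A)·σ_{p+1}(C)·σ_{M−n−p}(D̃)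 / (1 + σ_{p+1}(C)·‖G̃L‖/σ_p(C)). -/
/-- `L` is a best rank-`p` approximation of `C` obtained by truncating a singular value
decomposition `C = Q S Pᵀ` of `C` after the first `p` singular values. -/
def IsSVDTruncation {a b : ℕ} (C L : Matrix (Fin a) (Fin b) ℝ) (p : ℕ) : Prop :=
  ∃ (Q : Matrix (Fin a) (Fin a) ℝ) (P : Matrix (Fin b) (Fin b) ℝ)
    (S : Matrix (Fin a) (Fin b) ℝ),
    Q.transpose * Q = 1 ∧ P.transpose * P = 1 ∧
    (∀ (i : Fin a) (j : Fin b), (i : ℕ) ≠ (j : ℕ) → S i j = 0) ∧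
    (∀ (i : Fin a) (j : Fin b), (i : ℕ) = (j : ℕ) → S i j = singularValue C ((i : ℕ) + 1)) ∧
    C = Q * S * P.transpose ∧
    L = Q * Matrix.of (fun (i : Fin a) (j : Fin b) => if (i : ℕ) < p then S i j else 0)
          * P.transpose

open Matrix
open scoped Matrix.Norms.L2Operator

section SpectralNorm

variable {k l m o : Type*} [Fintype k] [Fintype l] [Fintype m] [Fintype o]

lemma specNorm_eq_norm [DecidableEq l] (X : Matrix k l ℝ) : specNorm X = ‖X‖ := rfl

lemma norm_le_of_forall_norm_mulVec_le [DecidableEq l] {X : Matrix k l ℝ} {c : ℝ} (hc : 0 ≤ c)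
    (h : ∀ v : EuclideanSpace ℝ l, ‖WithLp.toLp 2 (X *ᵥ v.ofLp)‖ ≤ c * ‖v‖) : ‖X‖ ≤ c :=
  ContinuousLinearMap.opNorm_le_bound _ hc h

lemma norm_vecMulVec [DecidableEq l] (x : EuclideanSpace ℝ k) (y : EuclideanSpace ℝ l) :
    ‖vecMulVec x.ofLp y.ofLp‖ = ‖x‖ * ‖y‖ := by
  rw [← InnerProductSpace.norm_rankOne (𝕜 := ℝ), ← star_trivial y.ofLp,
    ← InnerProductSpace.symm_toEuclideanLin_rankOne, l2_opNorm_def]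
  simp only [LinearEquiv.trans_apply, LinearEquiv.apply_symm_apply]
  rfl

lemma norm_le_one_of_transpose_mul_self_eq_one [DecidableEq l] {P : Matrix k l ℝ}
    (hP : Pᵀ * P = 1) : ‖P‖ ≤ 1 := by
  have h : ‖P‖ * ‖P‖ ≤ 1 := by
    rw [← l2_opNorm_conjTranspose_mul_self, conjTranspose_eq_transpose_of_trivial, hP,
      ← diagonal_one, l2_opNorm_diagonal]
    exact pi_norm_le_iff_of_nonneg zero_le_one |>.2 fun _ => by simp
  nlinarith [norm_nonneg P]

lemma norm_mul_mul_transpose_le [DecidableEq k] [DecidableEq l] [DecidableEq m] [DecidableEq o]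
    {Q : Matrix k l ℝ} {P : Matrix m o ℝ} (hQ : Qᵀ * Q = 1) (hP : Pᵀ * P = 1)
    (X : Matrix l o ℝ) : ‖Q * X * Pᵀ‖ ≤ ‖X‖ := by
  have hP' : ‖Pᵀ‖ ≤ 1 := by
    rw [← conjTranspose_eq_transpose_of_trivial, l2_opNorm_conjTranspose]
    exact norm_le_one_of_transpose_mul_self_eq_one hP
  calc ‖Q * X * Pᵀ‖ ≤ ‖Q‖ * ‖X‖ * ‖Pᵀ‖ :=
        (l2_opNorm_mul _ _).trans (by gcongr; exact l2_opNorm_mul _ _)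
    _ ≤ 1 * ‖X‖ * 1 := by
        gcongr
        exact norm_le_one_of_transpose_mul_self_eq_one hQ
    _ = ‖X‖ := by ring

end SpectralNorm

section SingularValue

variable {k l o : Type*} [Fintype k] [Fintype l] [Fintype o] [DecidableEq l]

lemma bddBelow_specNorm_sub (X : Matrix k l ℝ) (i : ℕ) :
    BddBelow {r : ℝ | ∃ Y : Matrix k l ℝ, Y.rank ≤ i - 1 ∧ r = specNorm (X - Y)} :=
  ⟨0, by rintro r ⟨Y, -, rfl⟩; exact norm_nonneg _⟩

lemma singularValue_nonneg (X : Matrix k l ℝ) (i : ℕ) : 0 ≤ singularValue X i :=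
  Real.sInf_nonneg (by rintro r ⟨Y, -, rfl⟩; exact norm_nonneg _)

lemma singularValue_le_norm_sub (X : Matrix k l ℝ) {i : ℕ} {Y : Matrix k l ℝ}
    (hY : Y.rank ≤ i - 1) : singularValue X i ≤ ‖X - Y‖ :=
  csInf_le (bddBelow_specNorm_sub X i) ⟨Y, hY, rfl⟩

lemma singularValue_antitone (X : Matrix k l ℝ) : Antitone (singularValue X) := by
  intro i j hij
  refine csInf_le_csInf (bddBelow_specNorm_sub X j) ⟨_, 0, by simp, rfl⟩ ?_
  rintro r ⟨Y, hY, rfl⟩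
  exact ⟨Y, hY.trans (by omega), rfl⟩

lemma rank_le_card_sub_one_of_mulVec_eq_zero {m n : Type*} [Fintype n] {Y : Matrix m n ℝ}
    {v : n → ℝ} (hv : v ≠ 0) (h : Y *ᵥ v = 0) : Y.rank ≤ Fintype.card n - 1 := by
  have hker : 0 < Module.finrank ℝ (LinearMap.ker Y.mulVecLin) :=
    Module.finrank_pos_iff_exists_ne_zero.2 ⟨⟨v, by simpa using h⟩, by simpa using hv⟩
  have := LinearMap.finrank_range_add_finrank_ker Y.mulVecLin
  rw [Module.finrank_fintype_fun_eq_card] at this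
  change Module.finrank ℝ (LinearMap.range Y.mulVecLin) ≤ _
  omega

lemma singularValue_card_mul_norm_le (X : Matrix k l ℝ) (v : EuclideanSpace ℝ l) :
    singularValue X (Fintype.card l) * ‖v‖ ≤ ‖WithLp.toLp 2 (X *ᵥ v.ofLp)‖ := by
  rcases eq_or_ne v 0 with rfl | hv
  · simp
  have hv' : 0 < ‖v‖ := norm_pos_iff.2 hv
  set c : ℝ := (‖v‖ ^ 2)⁻¹
  have hc : c * (v.ofLp ⬝ᵥ v.ofLp) = 1 := by
    have : v.ofLp ⬝ᵥ v.ofLp = ‖v‖ ^ 2 := by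
      rw [EuclideanSpace.real_norm_sq_eq]
      simp [dotProduct, sq]
    rw [this, inv_mul_cancel₀ (by positivity)]
  -- `X (1 - c v vᵀ)` kills `v`, so has rank `< card l`; it differs from `X` by `c (X v) vᵀ`.
  have hY : (X * (1 - vecMulVec (c • v.ofLp) v.ofLp)) *ᵥ v.ofLp = 0 := by
    rw [← mulVec_mulVec, sub_mulVec, one_mulVec, vecMulVec_mulVec, op_smul_eq_smul, smul_smul,
      mul_comm, hc, one_smul, sub_self, mulVec_zero]
  have hXY : X - X * (1 - vecMulVec (c • v.ofLp) v.ofLp) =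
      vecMulVec (WithLp.toLp 2 (c • (X *ᵥ v.ofLp))).ofLp v.ofLp := by
    rw [Matrix.mul_sub, Matrix.mul_one, sub_sub_cancel, mul_vecMulVec, mulVec_smul]
  have hσ := singularValue_le_norm_sub X
    (rank_le_card_sub_one_of_mulVec_eq_zero (by simpa using hv) hY)
  rw [hXY, norm_vecMulVec, WithLp.toLp_smul, norm_smul, Real.norm_of_nonneg (by positivity)] at hσ
  calc singularValue X (Fintype.card l) * ‖v‖ ≤ c * ‖WithLp.toLp 2 (X *ᵥ v.ofLp)‖ * ‖v‖ * ‖v‖ := by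
        gcongr
    _ = ‖WithLp.toLp 2 (X *ᵥ v.ofLp)‖ := by simp only [c]; field_simp

lemma singularValue_card_mul_norm_le_norm_mul (X : Matrix k l ℝ) [DecidableEq o]
    (Y : Matrix l o ℝ) : singularValue X (Fintype.card l) * ‖Y‖ ≤ ‖X * Y‖ := by
  rcases (singularValue_nonneg X (Fintype.card l)).eq_or_lt with hσ | hσ
  · rw [← hσ, zero_mul]
    exact norm_nonneg _
  rw [← le_div_iff₀' hσ]
  refine norm_le_of_forall_norm_mulVec_le (by positivity) fun v => ?_
  rw [div_mul_eq_mul_div, le_div_iff₀' hσ]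
  calc singularValue X (Fintype.card l) * ‖WithLp.toLp 2 (Y *ᵥ v.ofLp)‖
      ≤ ‖WithLp.toLp 2 (X *ᵥ (Y *ᵥ v.ofLp))‖ := singularValue_card_mul_norm_le X _
    _ ≤ ‖X * Y‖ * ‖v‖ := by
        rw [mulVec_mulVec]
        exact l2_opNorm_mulVec _ v

end SingularValue

section RectDiag

-- Diagonals are indexed by `ℕ` so that matrices of different shapes can share them.
def rectDiag (a b : ℕ) : (ℕ → ℝ) →ₗ[ℝ] Matrix (Fin a) (Fin b) ℝ where
  toFun d := of fun i j => if (i : ℕ) = j then d i else 0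
  map_add' d e := by
    ext i j; simp only [of_apply, Matrix.add_apply, Pi.add_apply]; split_ifs <;> simp
  map_smul' r d := by
    ext i j; simp only [of_apply, Matrix.smul_apply, Pi.smul_apply]; split_ifs <;> simp

variable {a b c : ℕ}

lemma rectDiag_apply (d : ℕ → ℝ) (i : Fin a) (j : Fin b) :
    rectDiag a b d i j = if (i : ℕ) = j then d i else 0 := rfl

lemma rectDiag_congr {d e : ℕ → ℝ} (h : ∀ i, i < a → i < b → d i = e i) :
    rectDiag a b d = rectDiag a b e := by
  ext i j
  simp only [rectDiag_apply]
  split_ifs with hij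
  · exact h i i.isLt (hij ▸ j.isLt)
  · rfl

lemma rectDiag_mul_rectDiag (d e : ℕ → ℝ) :
    rectDiag a b d * rectDiag b c e = rectDiag a c fun i => if i < b then d i * e i else 0 := by
  ext i k
  rw [mul_apply, rectDiag_apply]
  by_cases hib : (i : ℕ) < b
  · rw [Finset.sum_eq_single ⟨i, hib⟩]
    · by_cases hik : (i : ℕ) = k
      · simp [rectDiag_apply, hik, (hik ▸ hib : (k : ℕ) < b)]
      · simp [rectDiag_apply, hik]
    · intro j _ hj
      rw [rectDiag_apply, if_neg fun h => hj (Fin.ext h.symm), zero_mul]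
    · simp
  · refine (Finset.sum_eq_zero fun j _ => ?_).trans (by simp [hib])
    rw [rectDiag_apply, if_neg fun h : (i : ℕ) = j => hib (h ▸ j.isLt), zero_mul]

lemma transpose_rectDiag (d : ℕ → ℝ) : (rectDiag a b d)ᵀ = rectDiag b a d := by
  ext i j
  simp only [transpose_apply, rectDiag_apply, eq_comm (a := (j : ℕ))]
  split_ifs with h
  · rw [h]
  · rfl

lemma rectDiag_eq_diagonal (d : ℕ → ℝ) : rectDiag a a d = diagonal fun i : Fin a => d i := by
  ext i j
  simp only [rectDiag_apply, diagonal_apply, Fin.val_inj]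

lemma rectDiag_one : rectDiag a a 1 = 1 := by
  rw [rectDiag_eq_diagonal]; rfl

lemma rank_rectDiag (d : ℕ → ℝ) :
    (rectDiag a a d).rank = Fintype.card {i : Fin a // d i ≠ 0} := by
  rw [rectDiag_eq_diagonal, rank_diagonal]

lemma norm_rectDiag_le {d : ℕ → ℝ} {r : ℝ} (h : ∀ i, |d i| ≤ r) : ‖rectDiag a b d‖ ≤ r := by
  have hr : 0 ≤ r := (abs_nonneg _).trans (h 0)
  have hsq : ‖rectDiag a b d‖ * ‖rectDiag a b d‖ ≤ r * r := by
    rw [← l2_opNorm_conjTranspose_mul_self, conjTranspose_eq_transpose_of_trivial,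
      transpose_rectDiag, rectDiag_mul_rectDiag, rectDiag_eq_diagonal, l2_opNorm_diagonal]
    refine pi_norm_le_iff_of_nonneg (by positivity) |>.2 fun i => ?_
    split_ifs
    · rw [Real.norm_eq_abs, abs_mul]
      exact mul_le_mul (h _) (h _) (abs_nonneg _) hr
    · simpa using mul_nonneg hr hr
  nlinarith [norm_nonneg (rectDiag a b d)]

end RectDiag

section SVD

variable {a b p : ℕ} {C L : Matrix (Fin a) (Fin b) ℝ}

lemma mul_rectDiag_mul_transpose_mul {k m : Type*} [Fintype k] [Fintype m] {c : ℕ}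
    (Q : Matrix k (Fin a) ℝ) {P : Matrix (Fin b) (Fin b) ℝ} (hP : Pᵀ * P = 1)
    (R : Matrix m (Fin c) ℝ) (d e : ℕ → ℝ) :
    Q * rectDiag a b d * Pᵀ * (P * rectDiag b c e * Rᵀ) =
      Q * rectDiag a c (fun i => if i < b then d i * e i else 0) * Rᵀ := by
  simp only [Matrix.mul_assoc]
  rw [← Matrix.mul_assoc Pᵀ P, hP, Matrix.one_mul, ← Matrix.mul_assoc (rectDiag a b d),
    rectDiag_mul_rectDiag]

lemma IsSVDTruncation.exists_rectDiag (hL : IsSVDTruncation C L p) :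
    ∃ (Q : Matrix (Fin a) (Fin a) ℝ) (P : Matrix (Fin b) (Fin b) ℝ), Qᵀ * Q = 1 ∧ Pᵀ * P = 1 ∧
      C = Q * rectDiag a b (fun i => singularValue C (i + 1)) * Pᵀ ∧
      L = Q * rectDiag a b (fun i => if i < p then singularValue C (i + 1) else 0) * Pᵀ := by
  obtain ⟨Q, P, S, hQ, hP, hS_off, hS_diag, hC, hL⟩ := hL
  have hS : S = rectDiag a b fun i => singularValue C (i + 1) := by
    ext i j
    rw [rectDiag_apply]
    split_ifs with hij
    · exact hS_diag i j hij
    · exact hS_off i j hij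
  refine ⟨Q, P, hQ, hP, hS ▸ hC, hL.trans ?_⟩
  congr 2
  ext i j
  rw [of_apply, hS, rectDiag_apply, rectDiag_apply]
  split_ifs <;> rfl

lemma sub_eq_mul_rectDiag_tail {Q : Matrix (Fin a) (Fin a) ℝ} {P : Matrix (Fin b) (Fin b) ℝ}
    {s : ℕ → ℝ} (hC : C = Q * rectDiag a b s * Pᵀ)
    (hL : L = Q * rectDiag a b (fun i => if i < p then s i else 0) * Pᵀ) :
    C - L = Q * rectDiag a b (fun i => if p ≤ i then s i else 0) * Pᵀ := by
  rw [hC, hL, ← Matrix.sub_mul, ← Matrix.mul_sub, ← map_sub]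
  congr 3
  funext i
  simp only [Pi.sub_apply]
  split_ifs <;> first | omega | ring

lemma exists_tail_projection_of_svd {Q : Matrix (Fin a) (Fin a) ℝ} {P : Matrix (Fin b) (Fin b) ℝ}
    (hP : Pᵀ * P = 1) {s : ℕ → ℝ} (hC : C = Q * rectDiag a b s * Pᵀ)
    (hL : L = Q * rectDiag a b (fun i => if i < p then s i else 0) * Pᵀ) :
    ∃ T : Matrix (Fin b) (Fin b) ℝ, (C - L) * T = C - L ∧ L * T = 0 ∧ ‖T‖ ≤ 1 := by
  refine ⟨P * rectDiag b b (fun i => if p ≤ i then 1 else 0) * Pᵀ, ?_, ?_, ?_⟩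
  · rw [sub_eq_mul_rectDiag_tail hC hL, mul_rectDiag_mul_transpose_mul Q hP]
    congr 2
    refine rectDiag_congr fun i _ hib => ?_
    simp only [hib, if_true]
    split_ifs <;> first | omega | ring
  · rw [hL, mul_rectDiag_mul_transpose_mul Q hP]
    convert Matrix.zero_mul (Pᵀ)
    convert Matrix.mul_zero Q
    convert map_zero (rectDiag a b) with i
    split_ifs <;> first | omega | simp
  · refine (norm_mul_mul_transpose_le hP hP _).trans (norm_rectDiag_le fun i => ?_)
    split_ifs <;> simp

lemma Fin.card_subtype_lt_val (a p : ℕ) :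
    Fintype.card {i : Fin a // p < (i : ℕ)} = a - (p + 1) := by
  rw [Fintype.card_subtype]
  have := Finset.card_filter_add_card_filter_not (s := Finset.univ)
    (fun i : Fin a => (i : ℕ) < p + 1)
  rw [Fin.card_filter_val_lt, Finset.card_univ, Fintype.card_fin] at this
  simp only [not_lt, Nat.succ_le_iff] at this
  omega

lemma exists_head_projection_of_svd {Q : Matrix (Fin a) (Fin a) ℝ} {P : Matrix (Fin b) (Fin b) ℝ}
    (hQ : Qᵀ * Q = 1) (hP : Pᵀ * P = 1) {s : ℕ → ℝ} (hC : C = Q * rectDiag a b s * Pᵀ)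
    (hL : L = Q * rectDiag a b (fun i => if i < p then s i else 0) * Pᵀ) (hpb : p < b)
    {r : ℝ} (hr : 0 < r) (hs : ∀ i < p, r ≤ s i) :
    ∃ (R : Matrix (Fin a) (Fin a) ℝ) (W Z : Matrix (Fin b) (Fin a) ℝ),
      (1 - R).rank ≤ a - (p + 1) ∧ s p • R = s p • (L * W) + (C - L) * Z ∧
      ‖W‖ ≤ r⁻¹ ∧ ‖Z‖ ≤ 1 := by
  -- `R` projects onto the first `p + 1` left singular vectors, `W` is the pseudo-inverse of `L`,
  -- and `(C - L) Z = s p • q qᵀ` for the `(p + 1)`-st left singular vector `q`.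
  refine ⟨Q * rectDiag a a (fun i => if i ≤ p then 1 else 0) * Qᵀ,
    P * rectDiag b a (fun i => if i < p then (s i)⁻¹ else 0) * Qᵀ,
    P * rectDiag b a (fun i => if i = p then 1 else 0) * Qᵀ, ?_, ?_, ?_, ?_⟩
  · have h1 : 1 - Q * rectDiag a a (fun i => if i ≤ p then 1 else 0) * Qᵀ =
        Q * rectDiag a a (fun i => if p < i then 1 else 0) * Qᵀ := by
      have hQQ : Q * Qᵀ = Q * rectDiag a a 1 * Qᵀ := by rw [rectDiag_one, Matrix.mul_one]
      rw [← mul_eq_one_comm.1 hQ, hQQ, ← Matrix.sub_mul, ← Matrix.mul_sub, ← map_sub]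
      congr 3
      funext i
      simp only [Pi.sub_apply, Pi.one_apply]
      split_ifs <;> first | omega | ring
    rw [h1]
    refine (rank_mul_le_left _ _).trans <| (rank_mul_le_right _ _).trans ?_
    rw [rank_rectDiag]
    simp only [ne_eq, ite_eq_right_iff, one_ne_zero, imp_false, not_not]
    exact (Fin.card_subtype_lt_val a p).le
  · rw [sub_eq_mul_rectDiag_tail hC hL, hL, mul_rectDiag_mul_transpose_mul Q hP,
      mul_rectDiag_mul_transpose_mul Q hP, ← Matrix.smul_mul, ← Matrix.mul_smul,
      ← Matrix.smul_mul, ← Matrix.mul_smul, ← map_smul, ← map_smul, ← Matrix.add_mul,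
      ← Matrix.mul_add, ← map_add]
    congr 2
    refine rectDiag_congr fun i _ _ => ?_
    simp only [Pi.smul_apply, Pi.add_apply, smul_eq_mul]
    rcases lt_trichotomy i p with hi | rfl | hi
    · have : s i ≠ 0 := (hr.trans_le (hs i hi)).ne'
      simp [hi, hi.le, (hi.trans hpb), this, hi.not_ge]
    · simp [hpb]
    · simp [hi.not_gt, hi.not_ge, hi.ne']
  · refine (norm_mul_mul_transpose_le hP hQ _).trans (norm_rectDiag_le fun i => ?_)
    split_ifs with hi
    · rw [abs_inv]
      exact inv_anti₀ hr ((hs i hi).trans (le_abs_self _))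
    · simpa using hr.le
  · refine (norm_mul_mul_transpose_le hP hQ _).trans (norm_rectDiag_le fun i => ?_)
    split_ifs <;> simp

end SVD

section Blocks

variable {k l m o k' : Type*}

lemma fromBlocks_mul_fromBlocks_eq_one [Fintype l] [Fintype m] [DecidableEq k] [DecidableEq o]
    {A : Matrix k l ℝ} {B : Matrix k m ℝ} {C : Matrix o l ℝ} {D : Matrix o m ℝ}
    {A' : Matrix l k ℝ} {B' : Matrix l o ℝ} {C' : Matrix m k ℝ} {D' : Matrix m o ℝ} :
    fromBlocks A B C D * fromBlocks A' B' C' D' = 1 ↔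
      A * A' + B * C' = 1 ∧ A * B' + B * D' = 0 ∧ C * A' + D * C' = 0 ∧ C * B' + D * D' = 1 := by
  rw [fromBlocks_multiply, ← fromBlocks_one, fromBlocks_inj]

variable [Fintype l] [Fintype m] [Fintype o]

lemma mul_sub_mul_eq_neg [DecidableEq o] {A : Matrix k l ℝ} {B : Matrix k o ℝ}
    {C L : Matrix l m ℝ} {F : Matrix o m ℝ} {D : Matrix m o ℝ} (hAC : A * C + B * F = 0)
    (hLD : L * D = 0) (hFD : F * D = 1) : A * (C - L) * D = -B := by
  rw [Matrix.mul_sub, Matrix.sub_mul, Matrix.mul_assoc A L, hLD, Matrix.mul_zero, sub_zero,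
    eq_neg_of_add_eq_zero_left hAC, Matrix.neg_mul, Matrix.mul_assoc, hFD, Matrix.mul_one]

lemma mul_eq_neg_mul_sub_mul_mul [Fintype k'] [DecidableEq l] {A : Matrix k l ℝ}
    {B : Matrix k o ℝ} {C L : Matrix l m ℝ} {F : Matrix o m ℝ} {E : Matrix l k' ℝ}
    {A' : Matrix k' l ℝ} {G : Matrix m l ℝ} {H : Matrix o k' ℝ} (hAC : A * C + B * F = 0)
    (hEA : E * A' + L * G = 1) (hHA : H * A' + F * G = 0) (hAL : A' * L = 0) :
    A * L = -(A * (C - L) * (G * L)) := by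
  have hLGL : A * L * (G * L) = A * L := by
    calc A * L * (G * L) = A * (L * G) * L := by simp only [Matrix.mul_assoc]
      _ = A * L := by
        rw [eq_sub_of_add_eq' hEA, Matrix.mul_sub, Matrix.mul_one, Matrix.sub_mul,
          Matrix.mul_assoc A, Matrix.mul_assoc E, hAL, Matrix.mul_zero, Matrix.mul_zero, sub_zero]
  have hCGL : A * C * (G * L) = 0 := by
    calc A * C * (G * L) = -(B * (F * G) * L) := by
          rw [eq_neg_of_add_eq_zero_left hAC]
          simp only [Matrix.neg_mul, Matrix.mul_assoc]
      _ = 0 := by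
        rw [eq_neg_of_add_eq_zero_right hHA, Matrix.mul_neg, Matrix.neg_mul, Matrix.mul_assoc B,
          Matrix.mul_assoc H, hAL, Matrix.mul_zero, Matrix.mul_zero, neg_zero, neg_zero]
  rw [Matrix.mul_sub, Matrix.sub_mul, hCGL, hLGL, zero_sub, neg_neg]

end Blocks

section Estimates

variable {k l o : Type*} [Fintype k] [Fintype l] [Fintype o] [DecidableEq l] [DecidableEq o]

lemma singularValue_card_mul_norm_le_of_projection {X : Matrix k l ℝ} {Y : Matrix l o ℝ}
    {F : Matrix o l ℝ} {T : Matrix l l ℝ} (hXT : X * T = X) (hYFT : Y * F * T = T)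
    (hT : ‖T‖ ≤ 1) : singularValue Y (Fintype.card o) * ‖X‖ ≤ ‖X * Y‖ := by
  set σ := singularValue Y (Fintype.card o)
  have hFT : σ * ‖F * T‖ ≤ 1 := by
    refine (singularValue_card_mul_norm_le_norm_mul Y (F * T)).trans ?_
    rwa [← Matrix.mul_assoc, hYFT]
  calc σ * ‖X‖ = σ * ‖X * Y * (F * T)‖ := by
        rw [show X * Y * (F * T) = X * (Y * F * T) by simp only [Matrix.mul_assoc], hYFT, hXT]
    _ ≤ σ * (‖X * Y‖ * ‖F * T‖) := by
        gcongr
        · exact singularValue_nonneg Y _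
        · exact l2_opNorm_mul _ _
    _ = ‖X * Y‖ * (σ * ‖F * T‖) := by ring
    _ ≤ ‖X * Y‖ := mul_le_of_le_one_right (norm_nonneg _) hFT

lemma mul_singularValue_le_of_head_projection {A : Matrix k l ℝ} {L N : Matrix l o ℝ}
    {G : Matrix o l ℝ} {R : Matrix l l ℝ} {W Z : Matrix o l ℝ} {i : ℕ} {σ τ : ℝ}
    (hσ : 0 ≤ σ) (hR : (1 - R).rank ≤ i - 1)
    (hRWZ : σ • R = σ • (L * W) + N * Z) (hAL : A * L = -(A * N * (G * L)))
    (hW : ‖W‖ ≤ τ⁻¹) (hZ : ‖Z‖ ≤ 1) :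
    σ * singularValue A i ≤ ‖A * N‖ * (1 + σ * ‖G * L‖ / τ) := by
  have hAR : singularValue A i ≤ ‖A * R‖ := by
    have := singularValue_le_norm_sub A ((rank_mul_le_right A (1 - R)).trans hR)
    rwa [Matrix.mul_sub, Matrix.mul_one, sub_sub_cancel] at this
  have hσAR : σ • (A * R) = A * N * (Z - σ • (G * L * W)) := by
    rw [← Matrix.mul_smul, hRWZ, Matrix.mul_add, Matrix.mul_smul, ← Matrix.mul_assoc A L, hAL]
    simp only [Matrix.mul_sub, Matrix.mul_smul, Matrix.neg_mul, Matrix.mul_assoc, smul_neg]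
    abel
  calc σ * singularValue A i ≤ σ * ‖A * R‖ := by gcongr
    _ = ‖A * N * (Z - σ • (G * L * W))‖ := by rw [← hσAR, norm_smul, Real.norm_of_nonneg hσ]
    _ ≤ ‖A * N‖ * (‖Z‖ + σ * (‖G * L‖ * ‖W‖)) := by
        refine (l2_opNorm_mul _ _).trans (mul_le_mul_of_nonneg_left ?_ (norm_nonneg _))
        refine (norm_sub_le _ _).trans (add_le_add le_rfl ?_)
        rw [norm_smul, Real.norm_of_nonneg hσ]
        exact mul_le_mul_of_nonneg_left (l2_opNorm_mul _ _) hσ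
    _ ≤ ‖A * N‖ * (1 + σ * (‖G * L‖ * τ⁻¹)) := by gcongr
    _ = ‖A * N‖ * (1 + σ * ‖G * L‖ / τ) := by ring

end Estimates

theorem norm_B_lower_bound_general (M n p : ℕ) (hM : n + p < M)
    (A : Matrix (Fin n) (Fin (n + p)) ℝ) (B : Matrix (Fin n) (Fin (M - n - p)) ℝ)
    (G : Matrix (Fin (M - n)) (Fin (n + p)) ℝ) (D : Matrix (Fin (M - n)) (Fin (M - n - p)) ℝ)
    (E : Matrix (Fin (n + p)) (Fin n) ℝ) (C : Matrix (Fin (n + p)) (Fin (M - n)) ℝ)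
    (H : Matrix (Fin (M - n - p)) (Fin n) ℝ) (F : Matrix (Fin (M - n - p)) (Fin (M - n)) ℝ)
    (hKinv : Matrix.fromBlocks A B G D * Matrix.fromBlocks E C H F = 1)
    (hσp : 0 < singularValue C p)
    (L : Matrix (Fin (n + p)) (Fin (M - n)) ℝ) (hL : IsSVDTruncation C L p)
    (A' : Matrix (Fin n) (Fin (n + p)) ℝ) (G' : Matrix (Fin (M - n)) (Fin (n + p)) ℝ)
    (D' : Matrix (Fin (M - n)) (Fin (M - n - p)) ℝ)
    (hJinv : Matrix.fromBlocks E L H F * Matrix.fromBlocks A' 0 G' D' = 1)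
    (hJinv' : Matrix.fromBlocks A' 0 G' D' * Matrix.fromBlocks E L H F = 1) :
    specNorm B ≥
      singularValue A n * singularValue C (p + 1) * singularValue D' (M - n - p) /
        (1 + singularValue C (p + 1) * specNorm (G' * L) / singularValue C p) := by
  obtain ⟨-, hAC, -, -⟩ := fromBlocks_mul_fromBlocks_eq_one.1 hKinv
  obtain ⟨hEA, hLD, hHA, hFD⟩ := fromBlocks_mul_fromBlocks_eq_one.1 hJinv
  obtain ⟨-, hAL, -, hGL⟩ := fromBlocks_mul_fromBlocks_eq_one.1 hJinv'
  simp only [Matrix.mul_zero, Matrix.zero_mul, zero_add, add_zero] at hLD hFD hAL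
  obtain ⟨Q, P, hQ, hP, hC, hLt⟩ := hL.exists_rectDiag
  obtain ⟨T, hNT, hLT, hT⟩ := exists_tail_projection_of_svd hP hC hLt
  obtain ⟨R, W, Z, hR, hRWZ, hW, hZ⟩ := exists_head_projection_of_svd hQ hP hC hLt (by omega) hσp
    fun i hi => singularValue_antitone C (by omega : i + 1 ≤ p)
  have hB : singularValue D' (M - n - p) * ‖A * (C - L)‖ ≤ ‖B‖ := by
    have hDFT : D' * F * T = T := by
      rw [eq_sub_of_add_eq' hGL, Matrix.sub_mul, Matrix.one_mul, Matrix.mul_assoc, hLT,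
        Matrix.mul_zero, sub_zero]
    simpa [mul_sub_mul_eq_neg hAC hLD hFD] using
      singularValue_card_mul_norm_le_of_projection (X := A * (C - L))
        (by rw [Matrix.mul_assoc, hNT]) hDFT hT
  have hσ := singularValue_nonneg C (p + 1)
  have hA := mul_singularValue_le_of_head_projection (i := n) hσ (hR.trans (by omega)) hRWZ
    (mul_eq_neg_mul_sub_mul_mul hAC hEA hHA hAL) hW hZ
  rw [specNorm_eq_norm, specNorm_eq_norm, ge_iff_le]
  set x := singularValue C (p + 1) * ‖G' * L‖ / singularValue C p
  have hx : 0 ≤ x := div_nonneg (mul_nonneg hσ (norm_nonneg _)) hσp.le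
  rw [div_le_iff₀ (by linarith)]
  linarith [mul_le_mul_of_nonneg_left hA (singularValue_nonneg D' (M - n - p)),
    mul_le_mul_of_nonneg_right hB (by linarith : 0 ≤ 1 + x)]

/-- Lower bound on `‖B‖` in terms of the singular values of `A`, `C`, `D'`:
`‖B‖ ≥ σ_n(A) σ_{p+1}(C) σ_{M−n−p}(D') / (1 + σ_{p+1}(C) ‖G' L‖ / σ_p(C))`. -/
theorem norm_B_lower_bound (M n p : ℕ) (hn : 0 < n) (hp : 0 < p) (hM : n + p < M)
    (A : Matrix (Fin n) (Fin (n + p)) ℝ) (B : Matrix (Fin n) (Fin (M - n - p)) ℝ)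
    (G : Matrix (Fin (M - n)) (Fin (n + p)) ℝ) (D : Matrix (Fin (M - n)) (Fin (M - n - p)) ℝ)
    (E : Matrix (Fin (n + p)) (Fin n) ℝ) (C : Matrix (Fin (n + p)) (Fin (M - n)) ℝ)
    (H : Matrix (Fin (M - n - p)) (Fin n) ℝ) (F : Matrix (Fin (M - n - p)) (Fin (M - n)) ℝ)
    (hKinv : Matrix.fromBlocks A B G D * Matrix.fromBlocks E C H F = 1)
    (hKinv' : Matrix.fromBlocks E C H F * Matrix.fromBlocks A B G D = 1)
    (hσp : 0 < singularValue C p)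
    (L : Matrix (Fin (n + p)) (Fin (M - n)) ℝ) (hL : IsSVDTruncation C L p)
    (hsmall : singularValue C (p + 1) < 1 / specNorm (Matrix.fromBlocks A B G D))
    (A' : Matrix (Fin n) (Fin (n + p)) ℝ) (G' : Matrix (Fin (M - n)) (Fin (n + p)) ℝ)
    (D' : Matrix (Fin (M - n)) (Fin (M - n - p)) ℝ)
    (hJinv : Matrix.fromBlocks E L H F * Matrix.fromBlocks A' 0 G' D' = 1)
    (hJinv' : Matrix.fromBlocks A' 0 G' D' * Matrix.fromBlocks E L H F = 1) :
    specNorm B ≥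
      singularValue A n * singularValue C (p + 1) * singularValue D' (M - n - p) /
        (1 + singularValue C (p + 1) * specNorm (G' * L) / singularValue C p) :=
  norm_B_lower_bound_general M n p hM A B G D E C H F hKinv hσp L hL A' G' D' hJinv hJinv'
end
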